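/- arXiv:1509.02586 — 3 statements merged into one kernel-verified Lean document; each statement's English description precedes it below -/
import Mathlib

section
/- Let x, a, b be real numbers with 0 ≤ x ≤ a < b and a > 0, and let k : [a, b] → ℝ be continuously differentiable. Then there exists ξ ∈ [a, b] such that ∫_a^b r·k(r)/√(r² − x²) dr − k(a)·(√(b² − x²) − √(a² − x²)) = k′(ξ) · ∫_a^b r(r − a)/√(r² − x²) dr. -/
/-!
Write `k s - k a = (s - a) · dslope k a s`. Since `k` is differentiable on all of `[a, b]`, the
divided difference `dslope k a` is continuous there, so the first mean value theorem for the
nonnegative weight `(s - a) · s / √(s² - x²)` produces a point `c` with the error equal to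
`dslope k a c` times the weight's integral, and Lagrange's mean value theorem turns `dslope k a c`
into `k' ξ`. The rectangle term itself is `k a` times `∫ s / √(s² - x²)`, whose antiderivative
`√(s² - x²)` also shows that this weight is integrable despite its singularity at `s = x`.
-/

open MeasureTheory intervalIntegral Set

open scoped Interval

theorem continuousOn_dslope_of_differentiableAt {𝕜 E : Type*} [NontriviallyNormedField 𝕜]
    [NormedAddCommGroup E] [NormedSpace 𝕜 E] {f : 𝕜 → E} {a : 𝕜} {s : Set 𝕜}
    (hf : ∀ t ∈ s, DifferentiableAt 𝕜 f t) : ContinuousOn (dslope f a) s := by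
  intro t ht
  rcases eq_or_ne t a with rfl | hta
  · exact (continuousAt_dslope_same.2 (hf t ht)).continuousWithinAt
  · exact (continuousWithinAt_dslope_of_ne hta).2 (hf t ht).continuousAt.continuousWithinAt

theorem exists_mem_Icc_dslope_eq {f f' : ℝ → ℝ} {a b : ℝ} (hab : a ≤ b)
    (hf : ∀ t ∈ Icc a b, HasDerivAt f (f' t) t) : ∃ θ ∈ Icc a b, dslope f a b = f' θ := by
  rcases hab.eq_or_lt with rfl | hab
  · exact ⟨a, left_mem_Icc.2 le_rfl, by rw [dslope_same, (hf a (left_mem_Icc.2 le_rfl)).deriv]⟩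
  obtain ⟨θ, hθ, hslope⟩ := exists_hasDerivAt_eq_slope f f' hab
    (fun t ht => (hf t ht).continuousAt.continuousWithinAt)
    (fun t ht => hf t (Ioo_subset_Icc_self ht))
  exact ⟨θ, Ioo_subset_Icc_self hθ, by rw [dslope_of_ne _ hab.ne', slope_def_field, hslope]⟩

theorem exists_integral_sub_mul_eq_mul_integral_sub_mul {f f' w : ℝ → ℝ} {a b : ℝ} (hab : a ≤ b)
    (hf : ∀ t ∈ Icc a b, HasDerivAt f (f' t) t) (hw : IntervalIntegrable w volume a b)
    (hw0 : ∀ s ∈ Ioc a b, 0 ≤ w s) :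
    ∃ ξ ∈ Icc a b, ∫ s in a..b, (f s - f a) * w s = f' ξ * ∫ s in a..b, (s - a) * w s := by
  obtain ⟨c, hc, hmean⟩ := exists_eq_const_mul_intervalIntegral_of_nonneg
    (continuousOn_dslope_of_differentiableAt (a := a) fun t ht =>
      (hf t (uIcc_of_le hab ▸ ht)).differentiableAt)
    (hw.continuousOn_mul (g := fun s => s - a) (by fun_prop))
    (fun s hs => mul_nonneg (sub_nonneg.2 (uIoc_of_le hab ▸ hs).1.le)
      (hw0 s (uIoc_of_le hab ▸ hs)))
  rw [uIcc_of_le hab] at hc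
  obtain ⟨ξ, hξ, hdslope⟩ := exists_mem_Icc_dslope_eq hc.1
    fun t ht => hf t (Icc_subset_Icc_right hc.2 ht)
  refine ⟨ξ, Icc_subset_Icc_right hc.2 hξ, ?_⟩
  calc ∫ s in a..b, (f s - f a) * w s
      = ∫ s in a..b, dslope f a s * ((s - a) * w s) := by
        congr 1 with s
        rw [← sub_smul_dslope f a s, smul_eq_mul]
        ring
    _ = f' ξ * ∫ s in a..b, (s - a) * w s := by rw [hmean, hdslope]

theorem hasDerivAt_sqrt_sq_sub_sq {x s : ℝ} (h : x ^ 2 < s ^ 2) :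
    HasDerivAt (fun r => √(r ^ 2 - x ^ 2)) (s / √(s ^ 2 - x ^ 2)) s := by
  convert ((hasDerivAt_pow 2 s).sub_const (x ^ 2)).sqrt (sub_pos.2 h).ne' using 1
  field_simp
  ring

section SqrtWeight

variable {x a b : ℝ}

theorem sq_lt_sq_of_lt_of_sq_le (ha : 0 ≤ a) (hxa : x ^ 2 ≤ a ^ 2) {s : ℝ} (hs : a < s) :
    x ^ 2 < s ^ 2 :=
  hxa.trans_lt (pow_lt_pow_left₀ hs ha two_ne_zero)

theorem intervalIntegrable_div_sqrt_sq_sub_sq (ha : 0 ≤ a) (hxa : x ^ 2 ≤ a ^ 2) (hab : a ≤ b) :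
    IntervalIntegrable (fun s => s / √(s ^ 2 - x ^ 2)) volume a b :=
  (intervalIntegrable_iff_integrableOn_Ioc_of_le hab).2 <|
    integrableOn_deriv_of_nonneg (by fun_prop)
      (fun s hs => hasDerivAt_sqrt_sq_sub_sq (sq_lt_sq_of_lt_of_sq_le ha hxa hs.1))
      (fun s hs => div_nonneg (ha.trans hs.1.le) (Real.sqrt_nonneg _))

theorem integral_div_sqrt_sq_sub_sq (ha : 0 ≤ a) (hxa : x ^ 2 ≤ a ^ 2) (hab : a ≤ b) :
    ∫ s in a..b, s / √(s ^ 2 - x ^ 2) = √(b ^ 2 - x ^ 2) - √(a ^ 2 - x ^ 2) :=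
  integral_eq_sub_of_hasDerivAt_of_le hab (by fun_prop)
    (fun s hs => hasDerivAt_sqrt_sq_sub_sq (sq_lt_sq_of_lt_of_sq_le ha hxa hs.1))
    (intervalIntegrable_div_sqrt_sq_sub_sq ha hxa hab)

end SqrtWeight

theorem abel_quadrature_error_mean_value_general
    (x a b : ℝ) (hx : 0 ≤ x) (hxa : x ≤ a) (hab : a < b)
    (k k' : ℝ → ℝ)
    (hderiv : ∀ t ∈ Set.Icc a b, HasDerivAt k (k' t) t) :
    ∃ ξ ∈ Set.Icc a b,
      (∫ s in a..b, s * k s / Real.sqrt (s ^ 2 - x ^ 2))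
          - k a * (Real.sqrt (b ^ 2 - x ^ 2) - Real.sqrt (a ^ 2 - x ^ 2))
        = k' ξ * ∫ s in a..b, s * (s - a) / Real.sqrt (s ^ 2 - x ^ 2) := by
  have ha : 0 ≤ a := hx.trans hxa
  have hxa' : x ^ 2 ≤ a ^ 2 := pow_le_pow_left₀ hx hxa 2
  have hw := intervalIntegrable_div_sqrt_sq_sub_sq ha hxa' hab.le
  have hk : ContinuousOn k [[a, b]] := by
    rw [uIcc_of_le hab.le]
    exact fun t ht => (hderiv t ht).continuousAt.continuousWithinAt
  obtain ⟨ξ, hξ, hmean⟩ := exists_integral_sub_mul_eq_mul_integral_sub_mul hab.le hderiv hw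
    fun s hs => div_nonneg (ha.trans hs.1.le) (Real.sqrt_nonneg _)
  refine ⟨ξ, hξ, ?_⟩
  calc (∫ s in a..b, s * k s / √(s ^ 2 - x ^ 2)) - k a * (√(b ^ 2 - x ^ 2) - √(a ^ 2 - x ^ 2))
      = ∫ s in a..b, (k s - k a) * (s / √(s ^ 2 - x ^ 2)) := by
        rw [← integral_div_sqrt_sq_sub_sq ha hxa' hab.le, ← intervalIntegral.integral_const_mul,
          ← integral_sub _ (hw.const_mul _)]
        · congr 1 with s
          ring
        · convert hw.continuousOn_mul hk using 2 with s
          ring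
    _ = k' ξ * ∫ s in a..b, (s - a) * (s / √(s ^ 2 - x ^ 2)) := hmean
    _ = k' ξ * ∫ s in a..b, s * (s - a) / √(s ^ 2 - x ^ 2) := by
        congr 2 with s
        ring

/-- Let `0 ≤ x ≤ a < b` with `a > 0`, and let `k` be continuously differentiable on
`[a, b]` (with derivative `k'`).  Then there exists `ξ ∈ [a, b]` such that
`∫_a^b r·k(r)/√(r² − x²) dr − k(a)·(√(b² − x²) − √(a² − x²))
  = k'(ξ) · ∫_a^b r(r − a)/√(r² − x²) dr`. -/
theorem abel_quadrature_error_mean_value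
    (x a b : ℝ) (hx : 0 ≤ x) (hxa : x ≤ a) (hab : a < b) (ha : 0 < a)
    (k k' : ℝ → ℝ)
    (hderiv : ∀ t ∈ Set.Icc a b, HasDerivAt k (k' t) t)
    (hcont : ContinuousOn k' (Set.Icc a b)) :
    ∃ ξ ∈ Set.Icc a b,
      (∫ s in a..b, s * k s / Real.sqrt (s ^ 2 - x ^ 2))
          - k a * (Real.sqrt (b ^ 2 - x ^ 2) - Real.sqrt (a ^ 2 - x ^ 2))
        = k' ξ * ∫ s in a..b, s * (s - a) / Real.sqrt (s ^ 2 - x ^ 2) :=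
  abel_quadrature_error_mean_value_general x a b hx hxa hab k k' hderiv
end

section
/- Let n ≥ 2, let 0 = r_1 < r_2 < ⋯ < r_n = R be a mesh of nodes, set x_i = r_i, and define p_{ij} = √(r_{j+1}² − x_i²) − √(r_j² − x_i²) for 1 ≤ i ≤ j ≤ n−1. Suppose real numbers Δk_i, ε_i, d_i, δ_i (i = 1, …, n−1) satisfy ∑_{j=i}^{n−1} p_{ij} Δk_j = ε_i + d_i and |d_i| ≤ δ_i for every i. Define B_{n−1} = (|ε_{n−1}| + δ_{n−1})/p_{n−1,n−1} and B_i = (|ε_i| + δ_i + ∑_{j=i+1}^{n−1} p_{ij} B_j)/p_{ii} for i = n−2, …, 1. Then |Δk_i| ≤ B_i for every i = 1, …, n−1. -/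
open MeasureTheory Finset

/-- Let `n ≥ 2`, `0 = r 1 < ⋯ < r n = R` a mesh (with `x i = r i`), and
`p i j = √(r (j+1)² − r i²) − √(r j² − r i²)`.  Suppose
`∑_{j=i}^{n−1} p i j · Δk j = ε i + d i` with `|d i| ≤ δ i` for every `i = 1, …, n−1`.
Define `B (n−1) = (|ε (n−1)| + δ (n−1))/p (n−1) (n−1)` and
`B i = (|ε i| + δ i + ∑_{j=i+1}^{n−1} p i j · B j)/p i i` for `i = n−2, …, 1`.
Then `|Δk i| ≤ B i` for every `i = 1, …, n−1`. -/
theorem abel_quadrature_error_bound_noisy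
    (n : ℕ) (hn : 2 ≤ n) (r : ℕ → ℝ) (hr0 : r 1 = 0)
    (hmono : ∀ j, 1 ≤ j → j < n → r j < r (j + 1))
    (p : ℕ → ℕ → ℝ)
    (hp : ∀ i j, p i j =
      Real.sqrt ((r (j + 1)) ^ 2 - (r i) ^ 2) - Real.sqrt ((r j) ^ 2 - (r i) ^ 2))
    (Δk ε d δ : ℕ → ℝ)
    (hsys : ∀ i, 1 ≤ i → i < n → ∑ j ∈ Finset.Ico i n, p i j * Δk j = ε i + d i)
    (hd : ∀ i, 1 ≤ i → i < n → |d i| ≤ δ i)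
    (B : ℕ → ℝ)
    (hBlast : B (n - 1) = (|ε (n - 1)| + δ (n - 1)) / p (n - 1) (n - 1))
    (hBrec : ∀ i, 1 ≤ i → i < n - 1 →
      B i = (|ε i| + δ i + ∑ j ∈ Finset.Ico (i + 1) n, p i j * B j) / p i i) :
    ∀ i, 1 ≤ i → i < n → |Δk i| ≤ B i := by
  -- monotonicity of r on [1, n]
  have hrmono : ∀ i, 1 ≤ i → ∀ j, i ≤ j → j ≤ n → r i ≤ r j := by
    intro i hi j hij hjn
    induction j, hij using Nat.le_induction with
    | base => exact le_rfl
    | succ j hij ih =>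
      have h1 : r j < r (j + 1) := hmono j (le_trans hi hij) (by omega)
      exact le_trans (ih (by omega)) h1.le
  -- positivity of p
  have hppos : ∀ i j, 1 ≤ i → i ≤ j → j < n → 0 < p i j := by
    intro i j hi hij hj
    rw [hp]
    have h0 : 0 ≤ r i := by
      have := hrmono 1 le_rfl i hi (by omega)
      rw [hr0] at this; exact this
    have h1 : r i ≤ r j := hrmono i hi j hij (by omega)
    have h2 : r j < r (j + 1) := hmono j (by omega) hj
    have hnn : 0 ≤ r j ^ 2 - r i ^ 2 := by nlinarith
    have hlt : r j ^ 2 - r i ^ 2 < r (j + 1) ^ 2 - r i ^ 2 := by nlinarith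
    have := Real.sqrt_lt_sqrt hnn hlt
    linarith
  -- unified recursion for B
  have hB : ∀ i, 1 ≤ i → i < n →
      B i = (|ε i| + δ i + ∑ j ∈ Finset.Ico (i + 1) n, p i j * B j) / p i i := by
    intro i hi hin
    rcases lt_or_ge i (n - 1) with h | h
    · exact hBrec i hi h
    · have hieq : i = n - 1 := by omega
      have hempty : Finset.Ico (i + 1) n = ∅ := Finset.Ico_eq_empty (by omega)
      rw [hempty, Finset.sum_empty, add_zero, hieq, hBlast]
  -- the key inductive step
  have step : ∀ i, 1 ≤ i → i < n →
      (∀ j, i < j → j < n → |Δk j| ≤ B j) → |Δk i| ≤ B i := by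
    intro i hi hin ih
    have hpii := hppos i i hi le_rfl hin
    have hsum := hsys i hi hin
    rw [Finset.sum_eq_sum_Ico_succ_bot hin] at hsum
    have hkey : p i i * Δk i =
        ε i + d i - ∑ j ∈ Finset.Ico (i + 1) n, p i j * Δk j := by linarith
    have hS : |∑ j ∈ Finset.Ico (i + 1) n, p i j * Δk j|
        ≤ ∑ j ∈ Finset.Ico (i + 1) n, p i j * B j := by
      refine le_trans (Finset.abs_sum_le_sum_abs _ _) (Finset.sum_le_sum ?_)
      intro j hj
      rw [Finset.mem_Ico] at hj
      have hpij := hppos i j hi (by omega) hj.2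
      rw [abs_mul, abs_of_pos hpij]
      exact mul_le_mul_of_nonneg_left (ih j (by omega) hj.2) hpij.le
    have hbound : p i i * |Δk i| ≤
        |ε i| + δ i + ∑ j ∈ Finset.Ico (i + 1) n, p i j * B j := by
      have h1 : p i i * |Δk i| = |p i i * Δk i| := by
        rw [abs_mul, abs_of_pos hpii]
      rw [h1, hkey]
      have hdi := hd i hi hin
      calc |ε i + d i - ∑ j ∈ Finset.Ico (i + 1) n, p i j * Δk j|
          ≤ |ε i| + |d i| + |∑ j ∈ Finset.Ico (i + 1) n, p i j * Δk j| := by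
            exact le_trans (abs_sub _ _) (by gcongr; exact abs_add_le _ _)
        _ ≤ |ε i| + δ i + ∑ j ∈ Finset.Ico (i + 1) n, p i j * B j := by gcongr
    rw [hB i hi hin, le_div_iff₀ hpii]
    linarith
  -- downward strong induction on n - i
  have main : ∀ k i, 1 ≤ i → i < n → n - i ≤ k → |Δk i| ≤ B i := by
    intro k
    induction k with
    | zero => intro i hi hin hk; omega
    | succ k ih =>
      intro i hi hin hk
      exact step i hi hin (fun j hij hjn => ih j (by omega) hjn (by omega))
  exact fun i hi hin => main (n - i) i hi hin le_rfl
end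

section
/- Let R > 0 and let k : [0, R] → ℝ be continuously differentiable. Define q(x) = 2∫_x^R r·k(r)/√(r² − x²) dr for x ∈ [0, R]. Then for every r ∈ (0, R), k(r) = −(1/π)·[ (q(R) − q(r))/√(R² − r²) + ∫_r^R x·(q(x) − q(r))/(x² − r²)^{3/2} dx ], where the integral converges (the factor q(x) − q(r) compensates the non-integrable singularity (x² − r²)^{−3/2} at x = r). -/
/-!
Integrating by parts, `q x = 2 (k R √(R² - x²) - ∫_t^R k'(s) √(s² - x²) ds)` for `t ≤ x ≤ R`, so
`x (q x - q t) / (x² - t²)^{3/2} = -2 k(R) K(R, x) + 2 ∫_t^R k'(s) K(s, x) ds` with the nonnegative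
kernel `K(s, x) = x (√(s² - t²) - √(s² - x²)) / (x² - t²)^{3/2}`. On `x < s` it has the elementary
primitive `arcsin (a / c) - a / (c + √(c² - a²))` in `a = √(x² - t²)`, `c = √(s² - t²)`, whence
`∫_t^R K(s, x) dx = π/2 - √(s² - t²) / √(R² - t²)`. Fubini and `∫_t^R k' = k R - k t` then leave
`-π k t`.
-/

open MeasureTheory intervalIntegral Real Set

theorem sqrt_pow_three {u : ℝ} (hu : 0 ≤ u) : √(u ^ 3) = √u ^ 3 := by
  rw [← sqrt_sq (pow_nonneg (sqrt_nonneg u) 3), ← pow_mul, mul_comm, pow_mul, sq_sqrt hu]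

theorem hasDerivAt_sqrt_sq_sub {t x : ℝ} (h : t ^ 2 < x ^ 2) :
    HasDerivAt (fun y => √(y ^ 2 - t ^ 2)) (x / √(x ^ 2 - t ^ 2)) x := by
  have hpos : 0 < √(x ^ 2 - t ^ 2) := sqrt_pos.2 (by linarith)
  convert ((hasDerivAt_pow 2 x).sub_const (t ^ 2)).sqrt (by linarith) using 1
  field_simp
  ring

/-- Found by substituting `a = c sin θ`. -/
theorem hasDerivAt_arcsin_div_sub_div {a c : ℝ} (ha : |a| < c) :
    HasDerivAt (fun a => arcsin (a / c) - a / (√(c ^ 2 - a ^ 2) + c))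
      (1 / (√(c ^ 2 - a ^ 2) + c)) a := by
  obtain ⟨ha₁, ha₂⟩ := abs_lt.1 ha
  have hc : 0 < c := by linarith
  have hac : a ^ 2 < c ^ 2 := sq_lt_sq' ha₁ ha₂
  have hb' : HasDerivAt (fun a => √(c ^ 2 - a ^ 2)) (-(a / √(c ^ 2 - a ^ 2))) a := by
    have hpos : 0 < √(c ^ 2 - a ^ 2) := sqrt_pos.2 (by linarith)
    convert ((hasDerivAt_pow 2 a).const_sub (c ^ 2)).sqrt (by linarith) using 1
    field_simp
    ring
  have harcsin : HasDerivAt (fun a => arcsin (a / c)) (1 / √(1 - (a / c) ^ 2) * (1 / c)) a :=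
    (hasDerivAt_arcsin (by rw [ne_eq, div_eq_iff hc.ne']; linarith)
      (by rw [ne_eq, div_eq_iff hc.ne']; linarith)).comp a ((hasDerivAt_id' a).div_const c)
  refine (harcsin.sub ((hasDerivAt_id' a).div (hb'.add_const c) (by positivity))).congr_deriv ?_
  set b := √(c ^ 2 - a ^ 2)
  have hb : 0 < b := sqrt_pos.2 (by linarith)
  have hb2 : b ^ 2 = c ^ 2 - a ^ 2 := sq_sqrt (by linarith)
  have hsqrt : √(1 - (a / c) ^ 2) = b / c := by
    rw [← sqrt_sq (div_pos hb hc).le]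
    congr 1
    rw [div_pow, div_pow, hb2]
    field_simp
  rw [hsqrt]
  field_simp
  linear_combination -hb2

/-- For `x > s` the convention `√(s² - x²) = 0` is intended: it lets one kernel cover both
`s < x` and `s > x`. -/
noncomputable def abelKernel (t s x : ℝ) : ℝ :=
  x * (√(s ^ 2 - t ^ 2) - √(s ^ 2 - x ^ 2)) / √((x ^ 2 - t ^ 2) ^ 3)

theorem abelKernel_nonneg {t s x : ℝ} (ht : 0 ≤ t) (hx : t ≤ x) : 0 ≤ abelKernel t s x := by
  have : √(s ^ 2 - x ^ 2) ≤ √(s ^ 2 - t ^ 2) := sqrt_le_sqrt (by nlinarith)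
  exact div_nonneg (mul_nonneg (ht.trans hx) (sub_nonneg.2 this)) (sqrt_nonneg _)

theorem hasDerivAt_abelKernel_primitive {t s x : ℝ} (ht : 0 ≤ t) (htx : t < x) (hxs : x < s) :
    HasDerivAt (fun y => arcsin (√(y ^ 2 - t ^ 2) / √(s ^ 2 - t ^ 2))
        - √(y ^ 2 - t ^ 2) / (√(√(s ^ 2 - t ^ 2) ^ 2 - √(y ^ 2 - t ^ 2) ^ 2) + √(s ^ 2 - t ^ 2)))
      (abelKernel t s x) x := by
  have htx2 : t ^ 2 < x ^ 2 := by nlinarith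
  have hxs2 : x ^ 2 < s ^ 2 := by nlinarith
  set a := √(x ^ 2 - t ^ 2) with ha_def
  set b := √(s ^ 2 - x ^ 2) with hb_def
  set c := √(s ^ 2 - t ^ 2) with hc_def
  have ha : 0 < a := sqrt_pos.2 (by linarith)
  have hb : 0 < b := sqrt_pos.2 (by linarith)
  have ha2 : a ^ 2 = x ^ 2 - t ^ 2 := sq_sqrt (by linarith)
  have hb2 : b ^ 2 = s ^ 2 - x ^ 2 := sq_sqrt (by linarith)
  have hc2 : c ^ 2 = s ^ 2 - t ^ 2 := sq_sqrt (by nlinarith)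
  have hac : |a| < c := by
    rw [abs_of_pos ha]
    exact sqrt_lt_sqrt (by linarith) (by linarith)
  have hcab : √(c ^ 2 - a ^ 2) = b := by rw [ha2, hc2, hb_def]; ring_nf
  refine ((hasDerivAt_arcsin_div_sub_div hac).comp x (hasDerivAt_sqrt_sq_sub htx2)).congr_deriv ?_
  rw [abelKernel, hcab, sqrt_pow_three (by linarith), ← ha_def, ← hb_def, ← hc_def]
  have hc : 0 < c := (abs_nonneg a).trans_lt hac
  field_simp
  linear_combination x * (ha2 + hb2 - hc2)

theorem integral_abelKernel_self {t s : ℝ} (ht : 0 ≤ t) (hts : t < s) :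
    IntegrableOn (abelKernel t s) (Ioc t s) ∧ ∫ x in t..s, abelKernel t s x = π / 2 - 1 := by
  have hc : 0 < √(s ^ 2 - t ^ 2) := sqrt_pos.2 (by nlinarith)
  set F := fun y => arcsin (√(y ^ 2 - t ^ 2) / √(s ^ 2 - t ^ 2))
    - √(y ^ 2 - t ^ 2) / (√(√(s ^ 2 - t ^ 2) ^ 2 - √(y ^ 2 - t ^ 2) ^ 2) + √(s ^ 2 - t ^ 2))
  have hF : Continuous F := by
    refine (continuous_arcsin.comp (by fun_prop)).sub (Continuous.div (by fun_prop) (by fun_prop)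
      fun y => ?_)
    have := sqrt_nonneg (√(s ^ 2 - t ^ 2) ^ 2 - √(y ^ 2 - t ^ 2) ^ 2)
    positivity
  have hderiv : ∀ x ∈ Ioo t s, HasDerivAt F (abelKernel t s x) x :=
    fun x hx => hasDerivAt_abelKernel_primitive ht hx.1 hx.2
  have hint : IntegrableOn (abelKernel t s) (Ioc t s) :=
    integrableOn_deriv_of_nonneg hF.continuousOn hderiv fun x hx => abelKernel_nonneg ht hx.1.le
  refine ⟨hint, ?_⟩
  rw [integral_eq_sub_of_hasDerivAt_of_le hts.le hF.continuousOn hderiv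
    ((intervalIntegrable_iff_integrableOn_Ioc_of_le hts.le).2 hint)]
  simp [F, hc.ne']

theorem hasDerivAt_neg_inv_sqrt_sq_sub {t x : ℝ} (h : t ^ 2 < x ^ 2) :
    HasDerivAt (fun y => -(√(y ^ 2 - t ^ 2))⁻¹) (x / √((x ^ 2 - t ^ 2) ^ 3)) x := by
  have ha : 0 < √(x ^ 2 - t ^ 2) := sqrt_pos.2 (by linarith)
  refine ((hasDerivAt_sqrt_sq_sub h).inv ha.ne').neg.congr_deriv ?_
  rw [sqrt_pow_three (by linarith)]
  field_simp

theorem integral_abelKernel {t s R : ℝ} (ht : 0 ≤ t) (hts : t < s) (hsR : s ≤ R) :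
    IntegrableOn (abelKernel t s) (Ioc t R) ∧
      ∫ x in t..R, abelKernel t s x = π / 2 - √(s ^ 2 - t ^ 2) / √(R ^ 2 - t ^ 2) := by
  have hpos : ∀ x ∈ Icc s R, t ^ 2 < x ^ 2 := fun x hx => by nlinarith [hx.1]
  have hcont : ContinuousOn (fun x => x / √((x ^ 2 - t ^ 2) ^ 3)) (Icc s R) :=
    continuousOn_id.div (by fun_prop) fun x hx => by
      have := sub_pos.2 (hpos x hx)
      positivity
  have heq : EqOn (abelKernel t s) (fun x => √(s ^ 2 - t ^ 2) * (x / √((x ^ 2 - t ^ 2) ^ 3)))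
      (Icc s R) := fun x hx => by
    rw [abelKernel, sqrt_eq_zero_of_nonpos (show s ^ 2 - x ^ 2 ≤ 0 by nlinarith [hx.1]), sub_zero]
    ring
  have hright : IntervalIntegrable (abelKernel t s) volume s R :=
    ((hcont.const_mul _).congr heq).intervalIntegrable_of_Icc hsR
  obtain ⟨hleft, hleft_eq⟩ := integral_abelKernel_self ht hts
  refine ⟨?_, ?_⟩
  · rw [← Ioc_union_Ioc_eq_Ioc hts.le hsR]
    exact hleft.union ((intervalIntegrable_iff_integrableOn_Ioc_of_le hsR).1 hright)
  · rw [← integral_add_adjacent_intervals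
      ((intervalIntegrable_iff_integrableOn_Ioc_of_le hts.le).2 hleft) hright, hleft_eq,
      integral_congr (heq.mono (by rw [uIcc_of_le hsR])), intervalIntegral.integral_const_mul,
      integral_eq_sub_of_hasDerivAt (fun x hx => hasDerivAt_neg_inv_sqrt_sq_sub
        (hpos x (by rwa [uIcc_of_le hsR] at hx))) (hcont.intervalIntegrable_of_Icc hsR)]
    have hc : 0 < √(s ^ 2 - t ^ 2) := sqrt_pos.2 (by nlinarith)
    field_simp
    ring

/-- Integration by parts; the part of the last integral over `[t, x]` vanishes, as
`√(s² - x²) = 0` there. -/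
theorem integral_mul_div_sqrt_sq_sub {k k' : ℝ → ℝ} {t x R : ℝ} (ht : 0 ≤ t) (htx : t ≤ x)
    (hxR : x ≤ R) (hk : ContinuousOn k (Icc t R)) (hk' : ContinuousOn k' (Icc t R))
    (hderiv : ∀ s ∈ Ioo t R, HasDerivAt k (k' s) s) :
    ∫ s in x..R, s * k s / √(s ^ 2 - x ^ 2)
      = k R * √(R ^ 2 - x ^ 2) - ∫ s in t..R, k' s * √(s ^ 2 - x ^ 2) := by
  have hsub : Icc x R ⊆ Icc t R := Icc_subset_Icc_left htx
  have hsqrt : Continuous fun s => √(s ^ 2 - x ^ 2) := by fun_prop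
  have hsqrt_deriv :
      ∀ s ∈ Ioo x R, HasDerivAt (fun s => √(s ^ 2 - x ^ 2)) (s / √(s ^ 2 - x ^ 2)) s :=
    fun s hs => hasDerivAt_sqrt_sq_sub (by nlinarith [hs.1])
  have hweight : IntegrableOn (fun s => s / √(s ^ 2 - x ^ 2)) (Icc x R) := by
    rw [integrableOn_Icc_iff_integrableOn_Ioc]
    exact integrableOn_deriv_of_nonneg hsqrt.continuousOn hsqrt_deriv
      fun s hs => div_nonneg (by linarith [hs.1]) (sqrt_nonneg _)
  have hint : IntervalIntegrable (fun s => s * k s / √(s ^ 2 - x ^ 2)) volume x R := by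
    rw [intervalIntegrable_iff_integrableOn_Icc_of_le hxR]
    exact ((hweight.continuousOn_mul (hk.mono hsub) isCompact_Icc).congr_fun
      (fun s _ => by ring) measurableSet_Icc)
  have hcont : ContinuousOn (fun s => k' s * √(s ^ 2 - x ^ 2)) (Icc t R) :=
    hk'.mul hsqrt.continuousOn
  have hvanish : ∫ s in t..x, k' s * √(s ^ 2 - x ^ 2) = 0 := by
    rw [integral_congr (g := fun _ => 0) fun s hs => by
      rw [uIcc_of_le htx] at hs
      simp only [sqrt_eq_zero_of_nonpos (show s ^ 2 - x ^ 2 ≤ 0 by nlinarith [hs.1, hs.2]),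
        mul_zero]]
    exact integral_zero
  have hparts : ∫ s in x..R, (k' s * √(s ^ 2 - x ^ 2) + s * k s / √(s ^ 2 - x ^ 2))
      = k R * √(R ^ 2 - x ^ 2) - k x * √(x ^ 2 - x ^ 2) :=
    integral_eq_sub_of_hasDerivAt_of_le hxR ((hk.mono hsub).mul hsqrt.continuousOn)
      (fun s hs => ((hderiv s ⟨htx.trans_lt hs.1, hs.2⟩).mul (hsqrt_deriv s hs)).congr_deriv
        (by ring))
      (((hcont.mono hsub).intervalIntegrable_of_Icc hxR).add hint)
  rw [← integral_add_adjacent_intervals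
    ((hcont.mono (Icc_subset_Icc_right hxR)).intervalIntegrable_of_Icc htx)
    ((hcont.mono hsub).intervalIntegrable_of_Icc hxR), hvanish, zero_add]
  rw [integral_add ((hcont.mono hsub).intervalIntegrable_of_Icc hxR) hint] at hparts
  simp only [sub_self, sqrt_zero, mul_zero, sub_zero] at hparts
  linarith

theorem integrable_mul_abelKernel {k' : ℝ → ℝ} {t R : ℝ} (ht : 0 ≤ t)
    (hk' : ContinuousOn k' (Icc t R)) :
    Integrable (Function.uncurry fun x s => k' s * abelKernel t s x)
      ((volume.restrict (Ioc t R)).prod (volume.restrict (Ioc t R))) := by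
  have hkernel : Measurable fun p : ℝ × ℝ => abelKernel t p.2 p.1 := by
    unfold abelKernel
    fun_prop
  have hmeas : AEStronglyMeasurable (Function.uncurry fun x s => k' s * abelKernel t s x)
      ((volume.restrict (Ioc t R)).prod (volume.restrict (Ioc t R))) :=
    ((hk'.mono Ioc_subset_Icc_self).aestronglyMeasurable measurableSet_Ioc).comp_snd.mul
      hkernel.aestronglyMeasurable
  refine (integrable_prod_iff' hmeas).2 ⟨?_, ?_⟩
  · filter_upwards [ae_restrict_mem measurableSet_Ioc] with s hs
    exact (integral_abelKernel ht hs.1 hs.2).1.const_mul (k' s)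
  · have hbound : IntegrableOn (fun s => ‖k' s‖ * (π / 2 - √(s ^ 2 - t ^ 2) / √(R ^ 2 - t ^ 2)))
        (Ioc t R) :=
      ((hk'.norm.mul (by fun_prop)).integrableOn_compact isCompact_Icc).mono_set
        Ioc_subset_Icc_self
    refine hbound.congr_fun_ae ?_
    filter_upwards [ae_restrict_mem measurableSet_Ioc] with s hs
    simp only [Function.uncurry_apply_pair, norm_mul]
    rw [MeasureTheory.integral_const_mul, ← (integral_abelKernel ht hs.1 hs.2).2,
      integral_of_le (hs.1.le.trans hs.2)]
    refine congrArg _ (setIntegral_congr_fun measurableSet_Ioc fun x hx => ?_)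
    exact (norm_of_nonneg (abelKernel_nonneg ht hx.1.le)).symm

theorem intervalIntegrable_integral_mul_abelKernel {k' : ℝ → ℝ} {t R : ℝ} (ht : 0 ≤ t)
    (htR : t ≤ R) (hk' : ContinuousOn k' (Icc t R)) :
    IntervalIntegrable (fun x => ∫ s in t..R, k' s * abelKernel t s x) volume t R := by
  simp only [integral_of_le htR]
  exact (intervalIntegrable_iff_integrableOn_Ioc_of_le htR).2
    (integrable_mul_abelKernel ht hk').integral_prod_left

theorem integral_integral_mul_abelKernel {k' : ℝ → ℝ} {t R : ℝ} (ht : 0 ≤ t)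
    (htR : t ≤ R) (hk' : ContinuousOn k' (Icc t R)) :
    ∫ x in t..R, ∫ s in t..R, k' s * abelKernel t s x
      = ∫ s in t..R, k' s * (π / 2 - √(s ^ 2 - t ^ 2) / √(R ^ 2 - t ^ 2)) := by
  simp only [integral_of_le htR]
  rw [integral_integral_swap (integrable_mul_abelKernel ht hk')]
  refine setIntegral_congr_fun measurableSet_Ioc fun s hs => ?_
  rw [MeasureTheory.integral_const_mul, ← integral_of_le htR,
    (integral_abelKernel ht hs.1 hs.2).2]

section WeightedDifference

variable {k k' q : ℝ → ℝ} {t R : ℝ}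

theorem mul_sub_div_eq_integral_mul_abelKernel {x : ℝ}
    (hk' : ContinuousOn k' (Icc t R))
    (hq : ∀ x ∈ Icc t R,
      q x = 2 * (k R * √(R ^ 2 - x ^ 2) - ∫ s in t..R, k' s * √(s ^ 2 - x ^ 2)))
    (hx : x ∈ Icc t R) :
    x * (q x - q t) / √((x ^ 2 - t ^ 2) ^ 3)
      = -(2 * k R) * abelKernel t R x + 2 * ∫ s in t..R, k' s * abelKernel t s x := by
  have htR : t ≤ R := hx.1.trans hx.2
  have hint : ∀ y, IntervalIntegrable (fun s => k' s * √(s ^ 2 - y ^ 2)) volume t R :=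
    fun y => (hk'.mul (by fun_prop)).intervalIntegrable_of_Icc htR
  have hkernel : ∫ s in t..R, k' s * abelKernel t s x
      = x / √((x ^ 2 - t ^ 2) ^ 3) *
        ((∫ s in t..R, k' s * √(s ^ 2 - t ^ 2)) - ∫ s in t..R, k' s * √(s ^ 2 - x ^ 2)) := by
    rw [← integral_sub (hint t) (hint x), ← intervalIntegral.integral_const_mul]
    refine integral_congr fun s _ => ?_
    simp only [abelKernel]
    ring
  rw [hkernel, hq x hx, hq t ⟨le_rfl, htR⟩, abelKernel]
  ring

theorem intervalIntegrable_mul_sub_div_sqrt (ht : 0 ≤ t) (htR : t < R)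
    (hk' : ContinuousOn k' (Icc t R))
    (hq : ∀ x ∈ Icc t R,
      q x = 2 * (k R * √(R ^ 2 - x ^ 2) - ∫ s in t..R, k' s * √(s ^ 2 - x ^ 2))) :
    IntervalIntegrable (fun x => x * (q x - q t) / √((x ^ 2 - t ^ 2) ^ 3)) volume t R := by
  have hkernel : IntervalIntegrable (abelKernel t R) volume t R :=
    (intervalIntegrable_iff_integrableOn_Ioc_of_le htR.le).2
      (integral_abelKernel ht htR le_rfl).1
  refine (intervalIntegrable_congr fun x hx => ?_).2 ((hkernel.const_mul (-(2 * k R))).add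
    ((intervalIntegrable_integral_mul_abelKernel ht htR.le hk').const_mul 2))
  rw [uIoc_of_le htR.le] at hx
  exact mul_sub_div_eq_integral_mul_abelKernel hk' hq (Ioc_subset_Icc_self hx)

theorem integral_mul_sub_div_sqrt (ht : 0 ≤ t) (htR : t < R)
    (hk : ContinuousOn k (Icc t R)) (hk' : ContinuousOn k' (Icc t R))
    (hderiv : ∀ s ∈ Ioo t R, HasDerivAt k (k' s) s)
    (hq : ∀ x ∈ Icc t R,
      q x = 2 * (k R * √(R ^ 2 - x ^ 2) - ∫ s in t..R, k' s * √(s ^ 2 - x ^ 2))) :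
    ∫ x in t..R, x * (q x - q t) / √((x ^ 2 - t ^ 2) ^ 3)
      = -(2 * k R) * (π / 2 - 1) + π * (k R - k t)
          - 2 * (∫ s in t..R, k' s * √(s ^ 2 - t ^ 2)) / √(R ^ 2 - t ^ 2) := by
  have hFTC : ∫ s in t..R, k' s = k R - k t :=
    integral_eq_sub_of_hasDerivAt_of_le htR.le hk hderiv (hk'.intervalIntegrable_of_Icc htR.le)
  have hweighted : ∫ s in t..R, k' s * (π / 2 - √(s ^ 2 - t ^ 2) / √(R ^ 2 - t ^ 2))
      = π / 2 * (k R - k t) - (∫ s in t..R, k' s * √(s ^ 2 - t ^ 2)) / √(R ^ 2 - t ^ 2) := by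
    rw [← hFTC, ← intervalIntegral.integral_const_mul, ← intervalIntegral.integral_div,
      ← intervalIntegral.integral_sub]
    · exact integral_congr fun s _ => by ring
    · exact (hk'.intervalIntegrable_of_Icc htR.le).const_mul _
    · exact ((hk'.mul (by fun_prop)).intervalIntegrable_of_Icc htR.le).div_const _
  obtain ⟨hkernel_int, hkernel⟩ := integral_abelKernel ht htR le_rfl
  rw [integral_congr fun x hx => mul_sub_div_eq_integral_mul_abelKernel hk' hq
      (by rwa [uIcc_of_le htR.le] at hx),
    integral_add
      (((intervalIntegrable_iff_integrableOn_Ioc_of_le htR.le).2 hkernel_int).const_mul _)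
      ((intervalIntegrable_integral_mul_abelKernel ht htR.le hk').const_mul 2),
    intervalIntegral.integral_const_mul, intervalIntegral.integral_const_mul, hkernel,
    integral_integral_mul_abelKernel ht htR.le hk', hweighted,
    div_self (sqrt_pos.2 (by nlinarith)).ne']
  ring

end WeightedDifference

theorem abel_inversion_derivative_free_general
    (R : ℝ) (k : ℝ → ℝ)
    (hk : ContDiffOn ℝ 1 k (Set.Icc 0 R))
    (q : ℝ → ℝ)
    (hq : ∀ x, q x = 2 * ∫ s in x..R, s * k s / Real.sqrt (s ^ 2 - x ^ 2)) :
    ∀ t ∈ Set.Ioo (0 : ℝ) R,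
      IntervalIntegrable
          (fun x => x * (q x - q t) / Real.sqrt ((x ^ 2 - t ^ 2) ^ 3)) volume t R ∧
        k t = -(1 / Real.pi) *
            ((q R - q t) / Real.sqrt (R ^ 2 - t ^ 2)
              + ∫ x in t..R, x * (q x - q t) / Real.sqrt ((x ^ 2 - t ^ 2) ^ 3)) := by
  rintro t ⟨ht, htR⟩
  set k' := derivWithin k (Icc 0 R)
  have hsub : Icc t R ⊆ Icc 0 R := Icc_subset_Icc_left ht.le
  have hkc : ContinuousOn k (Icc t R) := hk.continuousOn.mono hsub
  have hk' : ContinuousOn k' (Icc t R) :=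
    (hk.continuousOn_derivWithin (uniqueDiffOn_Icc (ht.trans htR)) le_rfl).mono hsub
  have hderiv : ∀ s ∈ Ioo t R, HasDerivAt k (k' s) s := fun s hs =>
    (hk.differentiableOn one_ne_zero s (hsub (Ioo_subset_Icc_self hs))).hasDerivWithinAt.hasDerivAt
      (Icc_mem_nhds (ht.trans hs.1) hs.2)
  have hq_eq : ∀ x ∈ Icc t R,
      q x = 2 * (k R * √(R ^ 2 - x ^ 2) - ∫ s in t..R, k' s * √(s ^ 2 - x ^ 2)) := fun x hx => by
    rw [hq, integral_mul_div_sqrt_sq_sub ht.le hx.1 hx.2 hkc hk' hderiv]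
  refine ⟨intervalIntegrable_mul_sub_div_sqrt ht.le htR hk' hq_eq, ?_⟩
  have hqR : q R = 0 := by rw [hq, integral_same, mul_zero]
  have hc : 0 < √(R ^ 2 - t ^ 2) := sqrt_pos.2 (by nlinarith)
  rw [integral_mul_sub_div_sqrt ht.le htR hkc hk' hderiv hq_eq, hq_eq t ⟨le_rfl, htR.le⟩, hqR]
  field_simp
  ring

/-- Let `R > 0` and let `k` be continuously differentiable on `[0, R]`.  Define
`q x = 2 ∫_x^R s k(s)/√(s² − x²) ds`.  Then for every `t ∈ (0, R)`,
`k t = −(1/π)·[(q R − q t)/√(R² − t²) + ∫_t^R x (q x − q t)/√((x² − t²)³) dx]`,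
the integral converging (the factor `q x − q t` compensates the non-integrable
singularity `(x² − t²)^{−3/2}` at `x = t`). -/
theorem abel_inversion_derivative_free
    (R : ℝ) (hR : 0 < R) (k : ℝ → ℝ)
    (hk : ContDiffOn ℝ 1 k (Set.Icc 0 R))
    (q : ℝ → ℝ)
    (hq : ∀ x, q x = 2 * ∫ s in x..R, s * k s / Real.sqrt (s ^ 2 - x ^ 2)) :
    ∀ t ∈ Set.Ioo (0 : ℝ) R,
      IntervalIntegrable
          (fun x => x * (q x - q t) / Real.sqrt ((x ^ 2 - t ^ 2) ^ 3)) volume t R ∧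
        k t = -(1 / Real.pi) *
            ((q R - q t) / Real.sqrt (R ^ 2 - t ^ 2)
              + ∫ x in t..R, x * (q x - q t) / Real.sqrt ((x ^ 2 - t ^ 2) ^ 3)) :=
  abel_inversion_derivative_free_general R k hk q hq
end
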